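/- arXiv:2401.14318 — 2 statements merged into one kernel-verified Lean document; each statement's English description precedes it below -/
import Mathlib

section
/- The Kreweras complement K on noncrossing partitions satisfies K(P * Q) = K(P) ⊔̲ K(Q) and K(P ⊔̄ Q) = K(P) * K(Q) for all nonempty noncrossing partitions P and Q, where * is concatenation, ⊔̲ is right-merging (merging the last blocks) and ⊔̄ is left-merging (merging the first blocks). -/
/-- `r` is (the equivalence relation of) a noncrossing partition of `{0, …, n-1}`. -/
def IsNCPartition (n : ℕ) (r : ℕ → ℕ → Prop) : Prop :=
  (∀ i, r i i ↔ i < n) ∧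
  (∀ i j, r i j → r j i) ∧
  (∀ i j k, r i j → r j k → r i k) ∧
  (∀ a b c d, a < b → b < c → c < d → r a c → r b d → r a b)

/-- The empty partition. -/
def emptyPart : ℕ → ℕ → Prop := fun _ _ => False

/-- The partition `|` of a one-element set. -/
def onePart : ℕ → ℕ → Prop := fun i j => i = 0 ∧ j = 0

/-- Shift a partition by `m`. -/
def shiftPart (m : ℕ) (r : ℕ → ℕ → Prop) : ℕ → ℕ → Prop :=
  fun i j => m ≤ i ∧ m ≤ j ∧ r (i - m) (j - m)

/-- Concatenation `P * Q` of a partition `P` of `[m]` with a partition `Q`. -/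
def concatPart (m : ℕ) (P Q : ℕ → ℕ → Prop) : ℕ → ℕ → Prop :=
  fun i j => P i j ∨ shiftPart m Q i j

/-- Right-merging `P ⊔̲ Q` of `P` of `[m]` with `Q` of `[n]`:
merge the last block of `P` with the last block of `Q` in `P * Q`. -/
def rmergePart (m n : ℕ) (P Q : ℕ → ℕ → Prop) : ℕ → ℕ → Prop :=
  fun i j => concatPart m P Q i j ∨
    (P i (m - 1) ∧ shiftPart m Q j (m + n - 1)) ∨
    (shiftPart m Q i (m + n - 1) ∧ P j (m - 1))

/-- Left-merging `P ⊔̄ Q` of `P` of `[m]` with `Q`: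
merge the first block of `P` with the first block of `Q` in `P * Q`. -/
def lmergePart (m : ℕ) (P Q : ℕ → ℕ → Prop) : ℕ → ℕ → Prop :=
  fun i j => concatPart m P Q i j ∨
    (P i 0 ∧ shiftPart m Q j m) ∨
    (shiftPart m Q i m ∧ P j 0)

/-- The interlaced partition `P ∪ Q` on `1, 1̃, 2, 2̃, …, n, ñ`:
`P` lives on even indices, `Q` on odd ones. -/
def interlacePart (P Q : ℕ → ℕ → Prop) : ℕ → ℕ → Prop := fun i j =>
  (i % 2 = 0 ∧ j % 2 = 0 ∧ P (i / 2) (j / 2)) ∨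
  (i % 2 = 1 ∧ j % 2 = 1 ∧ Q (i / 2) (j / 2))

/-- `Q` is the Kreweras complement of the noncrossing partition `P` of `[n]`:
`Q` is the largest noncrossing partition of `[n]` (for reverse refinement)
such that `P ∪ Q` is noncrossing on the interlaced set. -/
def IsKreweras (n : ℕ) (P Q : ℕ → ℕ → Prop) : Prop :=
  IsNCPartition n Q ∧ IsNCPartition (2 * n) (interlacePart P Q) ∧
  ∀ Q', IsNCPartition n Q' → IsNCPartition (2 * n) (interlacePart P Q') →
    ∀ i j, Q' i j → Q i j


/-- Explicit Kreweras complement: `i ~ j` iff every block of `P` is entirely inside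
or entirely outside the interval between `i` and `j`. -/
def kcPart (n : ℕ) (P : ℕ → ℕ → Prop) : ℕ → ℕ → Prop :=
  fun i j => i < n ∧ j < n ∧ ∀ a b, P a b → ((a ≤ i ↔ a ≤ j) ↔ (b ≤ i ↔ b ≤ j))

lemma ncp_lt {n : ℕ} {r : ℕ → ℕ → Prop} (h : IsNCPartition n r) {i j : ℕ} (hij : r i j) :
    i < n ∧ j < n := by
  obtain ⟨hr, hs, ht, -⟩ := h
  exact ⟨(hr i).1 (ht _ _ _ hij (hs _ _ hij)), (hr j).1 (ht _ _ _ (hs _ _ hij) hij)⟩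

lemma kc_ncp {n : ℕ} {P : ℕ → ℕ → Prop} (hP : IsNCPartition n P) :
    IsNCPartition n (kcPart n P) := by
  refine ⟨?_, ?_, ?_, ?_⟩
  · intro i
    constructor
    · rintro ⟨h, -, -⟩; exact h
    · intro h; exact ⟨h, h, fun a b _ => by omega⟩
  · rintro i j ⟨hi, hj, hc⟩
    exact ⟨hj, hi, fun a b hab => by have := hc a b hab; omega⟩
  · rintro i j k ⟨hi, hj, h1⟩ ⟨-, hk, h2⟩
    exact ⟨hi, hk, fun a b hab => by have := h1 a b hab; have := h2 a b hab; omega⟩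
  · rintro a b c d hab hbc hcd ⟨ha, hc, h1⟩ ⟨hb, hd, h2⟩
    refine ⟨ha, hb, fun x y hxy => ?_⟩
    have u1 := h1 x y hxy
    have u2 := h2 x y hxy
    omega

lemma kc_interlace {n : ℕ} {P : ℕ → ℕ → Prop} (hP : IsNCPartition n P) :
    IsNCPartition (2 * n) (interlacePart P (kcPart n P)) := by
  obtain ⟨kr, ks, kt, knc⟩ := kc_ncp hP
  obtain ⟨hr, hs, ht, hnc⟩ := hP
  refine ⟨?_, ?_, ?_, ?_⟩
  · intro i
    constructor
    · rintro (⟨h1, -, h3⟩ | ⟨h1, -, h3⟩)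
      · have := (hr _).1 h3; omega
      · have := (kr _).1 h3; omega
    · intro h
      rcases Nat.mod_two_eq_zero_or_one i with h2 | h2
      · exact Or.inl ⟨h2, h2, (hr _).2 (by omega)⟩
      · exact Or.inr ⟨h2, h2, (kr _).2 (by omega)⟩
  · rintro i j (⟨h1, h2, h3⟩ | ⟨h1, h2, h3⟩)
    · exact Or.inl ⟨h2, h1, hs _ _ h3⟩
    · exact Or.inr ⟨h2, h1, ks _ _ h3⟩
  · rintro i j k (⟨h1, h2, h3⟩ | ⟨h1, h2, h3⟩) (⟨g1, g2, g3⟩ | ⟨g1, g2, g3⟩)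
    · exact Or.inl ⟨h1, g2, ht _ _ _ h3 g3⟩
    · omega
    · omega
    · exact Or.inr ⟨h1, g2, kt _ _ _ h3 g3⟩
  · rintro a b c d h1 h2 h3 (⟨pa, pc, hac⟩ | ⟨pa, pc, hac⟩) (⟨pb, pd, hbd⟩ | ⟨pb, pd, hbd⟩)
    · exact Or.inl ⟨pa, pb, hnc _ _ _ _ (by omega) (by omega) (by omega) hac hbd⟩
    · obtain ⟨-, -, cond⟩ := hbd
      have := cond _ _ hac
      omega
    · obtain ⟨-, -, cond⟩ := hac
      have := cond _ _ hbd
      omega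
    · exact Or.inr ⟨pa, pb, knc _ _ _ _ (by omega) (by omega) (by omega) hac hbd⟩

lemma cross_aux {n : ℕ} {P Q' : ℕ → ℕ → Prop} (hP : IsNCPartition n P)
    (hI : IsNCPartition (2 * n) (interlacePart P Q')) {i j a b : ℕ}
    (hij : Q' i j) (hab : P a b) (h1 : i < a) (h2 : a ≤ j) (h3 : b ≤ i ∨ j < b) : False := by
  obtain ⟨-, -, -, hnc⟩ := hI
  have pb : ∀ x y, P x y → interlacePart P Q' (2 * x) (2 * y) := by
    intro x y h
    exact Or.inl ⟨by omega, by omega, by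
      rw [show 2 * x / 2 = x by omega, show 2 * y / 2 = y by omega]; exact h⟩
  have qb : interlacePart P Q' (2 * i + 1) (2 * j + 1) := by
    exact Or.inr ⟨by omega, by omega, by
      rw [show (2 * i + 1) / 2 = i by omega, show (2 * j + 1) / 2 = j by omega]; exact hij⟩
  rcases h3 with h3 | h3
  · have := hnc (2 * b) (2 * i + 1) (2 * a) (2 * j + 1) (by omega) (by omega) (by omega)
      (pb b a (hP.2.1 _ _ hab)) qb
    rcases this with ⟨u, v, -⟩ | ⟨u, v, -⟩ <;> omega
  · have := hnc (2 * i + 1) (2 * a) (2 * j + 1) (2 * b) (by omega) (by omega) (by omega)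
      qb (pb a b hab)
    rcases this with ⟨u, v, -⟩ | ⟨u, v, -⟩ <;> omega

lemma kc_max {n : ℕ} {P Q' : ℕ → ℕ → Prop} (hP : IsNCPartition n P)
    (hQ' : IsNCPartition n Q') (hI : IsNCPartition (2 * n) (interlacePart P Q'))
    {i j : ℕ} (hij : Q' i j) : kcPart n P i j := by
  obtain ⟨hi, hj⟩ := ncp_lt hQ' hij
  refine ⟨hi, hj, fun a b hab => ?_⟩
  by_contra hcon
  have hji := hQ'.2.1 _ _ hij
  have hba := hP.2.1 _ _ hab
  rcases le_total i j with hle | hle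
  · have : (i < a ∧ a ≤ j ∧ (b ≤ i ∨ j < b)) ∨ (i < b ∧ b ≤ j ∧ (a ≤ i ∨ j < a)) := by omega
    rcases this with ⟨u1, u2, u3⟩ | ⟨u1, u2, u3⟩
    · exact cross_aux hP hI hij hab u1 u2 u3
    · exact cross_aux hP hI hij hba u1 u2 u3
  · have : (j < a ∧ a ≤ i ∧ (b ≤ j ∨ i < b)) ∨ (j < b ∧ b ≤ i ∧ (a ≤ j ∨ i < a)) := by omega
    rcases this with ⟨u1, u2, u3⟩ | ⟨u1, u2, u3⟩
    · exact cross_aux hP hI hji hab u1 u2 u3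
    · exact cross_aux hP hI hji hba u1 u2 u3

lemma isKreweras_kc {n : ℕ} {P : ℕ → ℕ → Prop} (hP : IsNCPartition n P) :
    IsKreweras n P (kcPart n P) :=
  ⟨kc_ncp hP, kc_interlace hP, fun _ hQ' hIQ' _ _ h => kc_max hP hQ' hIQ' h⟩

lemma kreweras_unique {n : ℕ} {P Q1 Q2 : ℕ → ℕ → Prop}
    (h1 : IsKreweras n P Q1) (h2 : IsKreweras n P Q2) : Q1 = Q2 :=
  funext fun i => funext fun j => propext
    ⟨fun h => h2.2.2 Q1 h1.1 h1.2.1 i j h, fun h => h1.2.2 Q2 h2.1 h2.2.1 i j h⟩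

lemma concat_ncp {m n : ℕ} {P Q : ℕ → ℕ → Prop}
    (hP : IsNCPartition m P) (hQ : IsNCPartition n Q) :
    IsNCPartition (m + n) (concatPart m P Q) := by
  obtain ⟨pr, ps, pt, pnc⟩ := hP
  obtain ⟨qr, qs, qt, qnc⟩ := hQ
  refine ⟨?_, ?_, ?_, ?_⟩
  · intro i
    constructor
    · rintro (h | ⟨h1, -, h3⟩)
      · have := (pr i).1 h; omega
      · have := (qr _).1 h3; omega
    · intro h
      rcases lt_or_ge i m with h1 | h1
      · exact Or.inl ((pr i).2 h1)
      · exact Or.inr ⟨h1, h1, (qr _).2 (by omega)⟩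
  · rintro i j (h | ⟨h1, h2, h3⟩)
    · exact Or.inl (ps _ _ h)
    · exact Or.inr ⟨h2, h1, qs _ _ h3⟩
  · rintro i j k (h | ⟨h1, h2, h3⟩) (g | ⟨g1, g2, g3⟩)
    · exact Or.inl (pt _ _ _ h g)
    · exfalso; have := (ncp_lt ⟨pr, ps, pt, pnc⟩ h).2; omega
    · exfalso; have := (ncp_lt ⟨pr, ps, pt, pnc⟩ g).1; omega
    · exact Or.inr ⟨h1, g2, qt _ _ _ h3 g3⟩
  · rintro a b c d h1 h2 h3 (h | ⟨u1, u2, u3⟩) (g | ⟨v1, v2, v3⟩)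
    · exact Or.inl (pnc _ _ _ _ h1 h2 h3 h g)
    · exfalso; have := (ncp_lt ⟨pr, ps, pt, pnc⟩ h).2; omega
    · exfalso; have := (ncp_lt ⟨pr, ps, pt, pnc⟩ g).2; omega
    · exact Or.inr ⟨u1, v1, qnc _ _ _ _ (by omega) (by omega) (by omega) u3 v3⟩

lemma lmerge_ncp {m n : ℕ} {P Q : ℕ → ℕ → Prop} (hm : 0 < m) (hn : 0 < n)
    (hP : IsNCPartition m P) (hQ : IsNCPartition n Q) :
    IsNCPartition (m + n) (lmergePart m P Q) := by
  have hC := concat_ncp hP hQ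
  obtain ⟨cr, cs, ct, cnc⟩ := hC
  obtain ⟨pr, ps, pt, pnc⟩ := hP
  obtain ⟨qr, qs, qt, qnc⟩ := hQ
  have pltm : ∀ {i j}, P i j → i < m ∧ j < m := fun h => ncp_lt ⟨pr, ps, pt, pnc⟩ h
  have qltn : ∀ {i j}, Q i j → i < n ∧ j < n := fun h => ncp_lt ⟨qr, qs, qt, qnc⟩ h
  have q0 : ∀ {x}, Q x (m - m) ↔ Q x 0 := by rw [Nat.sub_self]
  refine ⟨?_, ?_, ?_, ?_⟩
  · intro i
    constructor
    · rintro (h | ⟨h1, h2, -, -⟩ | ⟨⟨h2, -, -⟩, h1⟩)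
      · exact (cr i).1 h
      · have := (pltm h1).1; omega
      · have := (pltm h1).1; omega
    · intro h; exact Or.inl ((cr i).2 h)
  · rintro i j (h | ⟨h1, h2⟩ | ⟨h1, h2⟩)
    · exact Or.inl (cs _ _ h)
    · exact Or.inr (Or.inr ⟨h2, h1⟩)
    · exact Or.inr (Or.inl ⟨h2, h1⟩)
  · rintro i j k hij hjk
    rcases hij with h | ⟨h1, h2, -, h3⟩ | ⟨⟨h1, -, h2⟩, h3⟩ <;>
      rcases hjk with g | ⟨g1, g2, -, g3⟩ | ⟨⟨g1, -, g2⟩, g3⟩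
    · exact Or.inl (ct _ _ _ h g)
    · -- concat i j, P j 0 ∧ shift k : j < m so concat must be P i j
      rcases h with h | ⟨-, h2, -⟩
      · exact Or.inr (Or.inl ⟨pt _ _ _ h g1, g2, by omega, g3⟩)
      · exfalso; have := (pltm g1).1; omega
    · -- concat i j, (shift j ∧ P k 0) : j ≥ m so concat must be shift
      rcases h with h | ⟨h1', h2', h3'⟩
      · exfalso; have := (pltm h).2; omega
      · exact Or.inr (Or.inr ⟨⟨h1', by omega, q0.mpr (qt _ _ _ h3' (q0.mp g2))⟩, g3⟩)
    · -- P i 0 ∧ shift j, concat j k : concat must be shift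
      rcases g with g | ⟨g1', g2', g3'⟩
      · exfalso; have := (pltm g).1; omega
      · exact Or.inr (Or.inl ⟨h1, g2', by omega, q0.mpr (qt _ _ _ (qs _ _ g3') (q0.mp h3))⟩)
    · -- P i 0 ∧ shift j, P j 0 ∧ shift k : impossible (j ≥ m and j < m)
      exfalso; have := (pltm g1).1; omega
    · -- P i 0 ∧ shift j, shift j ∧ P k 0 : P i k
      exact Or.inl (Or.inl (pt _ _ _ h1 (ps _ _ g3)))
    · -- shift i ∧ P j 0, concat j k : j < m so concat = P j k
      rcases g with g | ⟨g1', g2', g3'⟩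
      · exact Or.inr (Or.inr ⟨⟨h1, by omega, h2⟩, pt _ _ _ (ps _ _ g) h3⟩)
      · exfalso; have := (pltm h3).1; omega
    · -- shift i ∧ P j 0, P j 0 ∧ shift k : Q (i-m) 0, Q (k-m) 0 → shift i k
      exact Or.inl (Or.inr ⟨h1, g2, qt _ _ _ (q0.mp h2) (qs _ _ (q0.mp g3))⟩)
    · -- shift i ∧ P j 0, shift j ∧ P k 0 : impossible
      exfalso; have := (pltm h3).1; omega
  · rintro a b c d h1 h2 h3 hac hbd
    rcases hac with h | ⟨ha, hc1, -, hc2⟩ | ⟨⟨ha1, -, ha2⟩, hc⟩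
    · rcases hbd with g | ⟨gb, gd1, -, gd2⟩ | ⟨⟨gb1, -, gb2⟩, gd⟩
      · exact Or.inl (cnc _ _ _ _ h1 h2 h3 h g)
      · -- concat a c, P b 0 ∧ shift d : b < m
        rcases h with h | ⟨h1', h2', h3'⟩
        · -- P a c, P b 0, a < b < c : derive P a b
          have hab : P a b := by
            rcases Nat.eq_zero_or_pos a with rfl | hapos
            · exact pt _ _ _ h (pt _ _ _ (ps _ _ h) (ps _ _ gb))
            · have := pnc 0 a b c hapos h1 h2 (ps _ _ gb) h
              exact pt _ _ _ (ps _ _ this) (ps _ _ gb)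
          exact Or.inl (Or.inl hab)
        · exfalso; have := (pltm gb).1; omega
      · -- concat a c, shift b ∧ P d 0 : b ≥ m, d < m, b < d impossible
        exfalso; have := (pltm gd).1; omega
    · -- P a 0 ∧ shift c (c ≥ m)
      rcases hbd with g | ⟨gb, gd1, -, gd2⟩ | ⟨⟨gb1, -, gb2⟩, gd⟩
      · -- concat b d : must be shift since d > c ≥ m
        rcases g with g | ⟨g1', g2', g3'⟩
        · exfalso; have := (pltm g).2; omega
        · -- need Q (b-m) 0
          have hqb : Q (b - m) 0 := by
            rcases Nat.eq_or_lt_of_le g1' with hbm | hbm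
            · rw [← hbm, Nat.sub_self]; exact (qr 0).2 hn
            · have h0c : Q 0 (c - m) := qs _ _ (q0.mp hc2)
              have := qnc 0 (b - m) (c - m) (d - m) (by omega) (by omega) (by omega) h0c g3'
              exact qs _ _ this
          exact Or.inr (Or.inl ⟨ha, g1', by omega, q0.mpr hqb⟩)
      · -- P b 0 : P a 0, P b 0 → P a b
        exact Or.inl (Or.inl (pt _ _ _ ha (ps _ _ gb)))
      · exfalso; have := (pltm gd).1; omega
    · -- shift a ∧ P c 0 : a ≥ m, c < m, a < c impossible
      exfalso; have := (pltm hc).1; omega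

lemma kc_concat {m n : ℕ} {P Q : ℕ → ℕ → Prop} (hm : 0 < m) (hn : 0 < n)
    (hP : IsNCPartition m P) (hQ : IsNCPartition n Q) :
    kcPart (m + n) (concatPart m P Q) = rmergePart m n (kcPart m P) (kcPart n Q) := by
  have e : m + n - 1 - m = n - 1 := by omega
  funext i j
  apply propext
  constructor
  · rintro ⟨hi, hj, hc⟩
    rcases lt_or_ge i m with h1 | h1 <;> rcases lt_or_ge j m with h2 | h2
    · exact Or.inl (Or.inl ⟨h1, h2, fun a b hab => hc a b (Or.inl hab)⟩)
    · -- i < m ≤ j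
      refine Or.inr (Or.inl ⟨⟨h1, by omega, fun a b hab => ?_⟩, h2, by omega, ?_⟩)
      · have u := hc a b (Or.inl hab)
        obtain ⟨ham, hbm⟩ := ncp_lt hP hab
        omega
      · rw [e]
        refine ⟨by omega, by omega, fun a b hab => ?_⟩
        have u := hc (a + m) (b + m) (Or.inr ⟨by omega, by omega, by simpa using hab⟩)
        obtain ⟨han, hbn⟩ := ncp_lt hQ hab
        omega
    · -- j < m ≤ i
      refine Or.inr (Or.inr ⟨⟨h1, by omega, ?_⟩, ⟨h2, by omega, fun a b hab => ?_⟩⟩)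
      · rw [e]
        refine ⟨by omega, by omega, fun a b hab => ?_⟩
        have u := hc (a + m) (b + m) (Or.inr ⟨by omega, by omega, by simpa using hab⟩)
        obtain ⟨han, hbn⟩ := ncp_lt hQ hab
        omega
      · have u := hc a b (Or.inl hab)
        obtain ⟨ham, hbm⟩ := ncp_lt hP hab
        omega
    · -- m ≤ i, m ≤ j
      refine Or.inl (Or.inr ⟨h1, h2, by omega, by omega, fun a b hab => ?_⟩)
      have u := hc (a + m) (b + m) (Or.inr ⟨by omega, by omega, by simpa using hab⟩)
      omega
  · rintro ((⟨hi, hj, hc⟩ | ⟨h1, h2, hi, hj, hc⟩) |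
      (⟨⟨hi, -, hc1⟩, hjm, -, hkq⟩ | ⟨⟨him, -, hkq⟩, hj, -, hc1⟩))
    · -- kcPart m P i j
      refine ⟨by omega, by omega, ?_⟩
      rintro a b (hab | ⟨ha, hb, -⟩)
      · exact hc a b hab
      · omega
    · -- shifted kcPart n Q
      refine ⟨by omega, by omega, ?_⟩
      rintro a b (hab | ⟨ha, hb, hab⟩)
      · obtain ⟨ham, hbm⟩ := ncp_lt hP hab; omega
      · have u := hc (a - m) (b - m) hab; omega
    · -- kcPart m P i (m-1) ∧ shift (kcPart n Q) j (m+n-1)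
      rw [e] at hkq
      obtain ⟨hjn, -, hc2⟩ := hkq
      refine ⟨by omega, by omega, ?_⟩
      rintro a b (hab | ⟨ha, hb, hab⟩)
      · have u := hc1 a b hab
        obtain ⟨ham, hbm⟩ := ncp_lt hP hab
        omega
      · have u := hc2 (a - m) (b - m) hab
        obtain ⟨han, hbn⟩ := ncp_lt hQ hab
        omega
    · -- symmetric
      rw [e] at hkq
      obtain ⟨hin, -, hc2⟩ := hkq
      refine ⟨by omega, by omega, ?_⟩
      rintro a b (hab | ⟨ha, hb, hab⟩)
      · have u := hc1 a b hab
        obtain ⟨ham, hbm⟩ := ncp_lt hP hab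
        omega
      · have u := hc2 (a - m) (b - m) hab
        obtain ⟨han, hbn⟩ := ncp_lt hQ hab
        omega

lemma kc_lmerge {m n : ℕ} {P Q : ℕ → ℕ → Prop} (hm : 0 < m) (hn : 0 < n)
    (hP : IsNCPartition m P) (hQ : IsNCPartition n Q) :
    kcPart (m + n) (lmergePart m P Q) = concatPart m (kcPart m P) (kcPart n Q) := by
  funext i j
  apply propext
  have P00 : P 0 0 := (hP.1 0).2 hm
  have Q00 : Q 0 0 := (hQ.1 0).2 hn
  have L0m : lmergePart m P Q 0 m :=
    Or.inr (Or.inl ⟨P00, le_refl m, le_refl m, by simpa using Q00⟩)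
  constructor
  · rintro ⟨hi, hj, hc⟩
    have hcross := hc 0 m L0m
    have hmij : (i < m ∧ j < m) ∨ (m ≤ i ∧ m ≤ j) := by omega
    rcases hmij with ⟨h1, h2⟩ | ⟨h1, h2⟩
    · exact Or.inl ⟨h1, h2, fun a b hab => hc a b (Or.inl (Or.inl hab))⟩
    · refine Or.inr ⟨h1, h2, by omega, by omega, fun a b hab => ?_⟩
      have u := hc (a + m) (b + m) (Or.inl (Or.inr ⟨by omega, by omega, by simpa using hab⟩))
      omega
  · rintro (⟨hi, hj, hc⟩ | ⟨h1, h2, hi, hj, hc⟩)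
    · refine ⟨by omega, by omega, ?_⟩
      rintro a b ((hab | ⟨ha, hb, -⟩) | (⟨ha0, hb1, -, hb2⟩ | ⟨⟨ha1, -, ha2⟩, hb0⟩))
      · exact hc a b hab
      · omega
      · have u := hc a 0 ha0
        obtain ⟨ham, -⟩ := ncp_lt hP ha0
        omega
      · have u := hc b 0 hb0
        obtain ⟨hbm, -⟩ := ncp_lt hP hb0
        omega
    · refine ⟨by omega, by omega, ?_⟩
      rintro a b ((hab | ⟨ha, hb, hab⟩) | (⟨ha0, hb1, -, hb2⟩ | ⟨⟨ha1, -, ha2⟩, hb0⟩))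
      · obtain ⟨ham, hbm⟩ := ncp_lt hP hab; omega
      · have u := hc (a - m) (b - m) hab; omega
      · have hb2' : Q (b - m) 0 := by rwa [Nat.sub_self] at hb2
        have u := hc (b - m) 0 hb2'
        obtain ⟨ham, -⟩ := ncp_lt hP ha0
        omega
      · have ha2' : Q (a - m) 0 := by rwa [Nat.sub_self] at ha2
        have u := hc (a - m) 0 ha2'
        obtain ⟨hbm, -⟩ := ncp_lt hP hb0
        omega

/-- The Kreweras complement satisfies `K(P * Q) = K(P) ⊔̲ K(Q)` and
`K(P ⊔̄ Q) = K(P) * K(Q)` for nonempty noncrossing partitions `P`, `Q`. -/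
theorem kreweras_concat_merge
    (Kr : ℕ → (ℕ → ℕ → Prop) → (ℕ → ℕ → Prop))
    (hKr : ∀ n P, IsNCPartition n P → IsKreweras n P (Kr n P))
    (m n : ℕ) (P Q : ℕ → ℕ → Prop)
    (hm : 0 < m) (hn : 0 < n)
    (hP : IsNCPartition m P) (hQ : IsNCPartition n Q) :
    Kr (m + n) (concatPart m P Q) = rmergePart m n (Kr m P) (Kr n Q) ∧
    Kr (m + n) (lmergePart m P Q) = concatPart m (Kr m P) (Kr n Q) := by
  have eKP : Kr m P = kcPart m P := kreweras_unique (hKr m P hP) (isKreweras_kc hP)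
  have eKQ : Kr n Q = kcPart n Q := kreweras_unique (hKr n Q hQ) (isKreweras_kc hQ)
  have hC := concat_ncp hP hQ
  have hL := lmerge_ncp hm hn hP hQ
  have e1 : Kr (m + n) (concatPart m P Q) = kcPart (m + n) (concatPart m P Q) :=
    kreweras_unique (hKr _ _ hC) (isKreweras_kc hC)
  have e2 : Kr (m + n) (lmergePart m P Q) = kcPart (m + n) (lmergePart m P Q) :=
    kreweras_unique (hKr _ _ hL) (isKreweras_kc hL)
  rw [e1, e2, eKP, eKQ, kc_concat hm hn hP hQ, kc_lmerge hm hn hP hQ]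
  exact ⟨rfl, rfl⟩
end

section
/- Let f = I·F ∈ G_B^I. Then S_f^{−1} · I · S_f = (F · I) ∘ (I · S_f) = (F · I) ∘ (I · F)^{∘−1}, where S_f is the S-transform of f defined by f^{∘−1} = I · S_f. -/
universe u

/-- A (formal) series of `n`-ary functions on `B` (the carrier of `Mult[[B]]`). -/
def MSeries (B : Type u) : Type u := ∀ n : ℕ, (Fin n → B) → B

namespace MSeries

variable {B : Type u} [Ring B]

/-- The multiplication `(f · g)_n(x₁,…,xₙ) = ∑ₖ f_k(x₁,…,x_k) g_{n-k}(x_{k+1},…,xₙ)`. -/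
def mul (f g : MSeries B) : MSeries B := fun n x =>
  ∑ k : Fin (n + 1),
    f k.1 (fun i => x (Fin.castLE (Nat.lt_succ_iff.mp k.isLt) i)) *
      g (n - k.1) (fun i => x ⟨k.1 + i.1, by have h1 := k.isLt; have h2 := i.isLt; omega⟩)

/-- The composition `(f ∘ g)_n(x₁,…,xₙ)
  = ∑_{n = k₁ + ⋯ + k_l, kᵢ ≥ 1} f_l(g_{k₁}(x₁,…), …, g_{k_l}(…,xₙ))`. -/
def comp (f g : MSeries B) : MSeries B := fun n x =>
  ∑ c : Composition n,
    f c.length (fun i => g (c.blocksFun i) (fun j => x (c.embedding i j)))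

/-- The compositional identity `I = (δ_{n,1} Id)`. -/
def idS : MSeries B := fun n =>
  match n with
  | 1 => fun x => x 0
  | _ => fun _ => 0

/-- The multiplicative unit `1 = (δ_{n,0} 1)`. -/
def oneS : MSeries B := fun n _ => if n = 0 then 1 else 0

end MSeries

/-- `f` is a series of `K`-multilinear functions, i.e. `f ∈ Mult[[B]]`. -/
def IsMultSeries (K : Type u) [Field K] {B : Type u} [Ring B] [Algebra K B]
    (f : MSeries B) : Prop :=
  ∀ n, ∃ F : MultilinearMap K (fun _ : Fin n => B) B, ∀ x, f n x = F x

/-!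
Composition on the right by a fixed series is multiplicative, `(a · b) ∘ h = (a ∘ h) · (b ∘ h)`:
appending identifies pairs of compositions of `k` and of `n - k`, for `k ≤ n`, with compositions of
`n` with a marked block boundary.

For `h = I · S`, which has no constant term, `I ∘ h = h`. Hence `(I · F) ∘ h = I` reads
`I · (S · (F ∘ h)) = I`, i.e. `S · (F ∘ h) = 1`, so that `F ∘ h = S⁻¹`, and then
`(F · I) ∘ h = (F ∘ h) · h = S⁻¹ · I · S`.
-/

namespace Composition

variable {n : ℕ}

def take (c : Composition n) (k : ℕ) : Composition (c.sizeUpTo k) :=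
  ⟨c.blocks.take k, fun hi => c.blocks_pos (List.take_subset _ _ hi), rfl⟩

def drop (c : Composition n) (k : ℕ) : Composition (n - c.sizeUpTo k) :=
  ⟨c.blocks.drop k, fun hi => c.blocks_pos (List.drop_subset _ _ hi), by
    have h1 := c.blocks.sum_take_add_sum_drop k
    have h2 := c.blocks_sum
    have h3 : c.sizeUpTo k = (c.blocks.take k).sum := rfl
    omega⟩

variable {a b : ℕ} (c₁ : Composition a) (c₂ : Composition b)

lemma append_blocksFun_left (j : Fin (c₁.append c₂).length) (i : Fin c₁.length)
    (hij : (j : ℕ) = i) : (c₁.append c₂).blocksFun j = c₁.blocksFun i := by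
  have h1 : (j : ℕ) < c₁.blocks.length := by rw [hij]; exact i.2
  simp only [blocksFun, List.get_eq_getElem, append_blocks]
  refine (List.getElem_append_left h1).trans ?_
  simp [hij]

lemma append_blocksFun_right (j : Fin (c₁.append c₂).length) (i : Fin c₂.length)
    (hij : (j : ℕ) = c₁.length + i) : (c₁.append c₂).blocksFun j = c₂.blocksFun i := by
  have h1 : c₁.blocks.length ≤ (j : ℕ) := by
    have hc : c₁.length = c₁.blocks.length := rfl
    omega
  simp only [blocksFun, List.get_eq_getElem, append_blocks]
  refine (List.getElem_append_right h1).trans ?_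
  simp [hij]

lemma append_sizeUpTo_of_le (k : ℕ) (hk : k ≤ c₁.length) :
    (c₁.append c₂).sizeUpTo k = c₁.sizeUpTo k := by
  show ((c₁.blocks ++ c₂.blocks).take k).sum = (c₁.blocks.take k).sum
  rw [List.take_append_of_le_length hk]

lemma append_sizeUpTo_length_add (k : ℕ) :
    (c₁.append c₂).sizeUpTo (c₁.length + k) = a + c₂.sizeUpTo k := by
  show ((c₁.blocks ++ c₂.blocks).take (c₁.blocks.length + k)).sum = _
  rw [List.take_length_add_append, List.sum_append, c₁.blocks_sum]
  rfl

end Composition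

namespace MSeries

variable {B : Type u}

lemma apply_congr (f : MSeries B) {m m' : ℕ} (h : m = m') {x : Fin m → B} {y : Fin m' → B}
    (hxy : ∀ i : Fin m', x ⟨i.1, h ▸ i.2⟩ = y i) : f m x = f m' y := by
  subst h
  congr 1
  funext i
  simpa using hxy i

variable [Ring B]

lemma oneS_mul (a : MSeries B) : oneS.mul a = a := by
  funext n x
  show ∑ k : Fin (n+1), _ = _
  rw [Finset.sum_eq_single (0 : Fin (n+1))]
  · show oneS 0 _ * a (n - 0) _ = a n x
    rw [show (oneS 0 : (Fin 0 → B) → B) = fun _ => 1 from rfl, one_mul]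
    exact apply_congr a rfl (fun i => congrArg x (Fin.ext (show 0 + (i:ℕ) = (i:ℕ) by omega)))
  · intro b _ hb
    have : (b : ℕ) ≠ 0 := fun h => hb (Fin.ext h)
    show oneS b.1 _ * _ = 0
    simp [oneS, this]
  · simp

lemma mul_oneS (a : MSeries B) : a.mul oneS = a := by
  funext n x
  show ∑ k : Fin (n+1), _ = _
  rw [Finset.sum_eq_single (Fin.last n)]
  · show a n _ * oneS (n - n) _ = a n x
    rw [show (oneS (n-n) : (Fin (n-n) → B) → B) = fun _ => 1 by rw [Nat.sub_self]; rfl, mul_one]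
    exact apply_congr a rfl (fun i => congrArg x (Fin.ext rfl))
  · intro b _ hb
    have hb' : (b : ℕ) ≠ n := fun h => hb (Fin.ext h)
    have : n - b.1 ≠ 0 := by have := b.isLt; omega
    show _ * oneS (n - b.1) _ = 0
    simp [oneS, this]
  · simp

lemma sigma_fin_ext {n : ℕ} {φ : Fin (n+1) → ℕ} {p q : Σ m : Fin (n+1), Fin (φ m)}
    (h1 : p.1.1 = q.1.1) (h2 : p.2.1 = q.2.1) : p = q := by
  obtain ⟨m, k⟩ := p
  obtain ⟨m', k'⟩ := q
  obtain rfl : m = m' := Fin.ext h1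
  obtain rfl : k = k' := Fin.ext h2
  rfl

/-- Reindexes the double sum of `(f · g) · h`, cut at `k` and then at `k + l`, as that of
`f · (g · h)`, cut at `m = k + l` and then at `k`. -/
def mulAssocEquiv (n : ℕ) :
    (Σ k : Fin (n+1), Fin (n - k.1 + 1)) ≃ (Σ m : Fin (n+1), Fin (m.1+1)) where
  toFun p := ⟨⟨p.1.1 + p.2.1, by have := p.1.isLt; have := p.2.isLt; omega⟩,
    ⟨p.1.1, by show p.1.1 < p.1.1 + p.2.1 + 1; omega⟩⟩
  invFun q := ⟨⟨q.2.1, by have := q.1.isLt; have := q.2.isLt; omega⟩,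
    ⟨q.1.1 - q.2.1, by
      show q.1.1 - q.2.1 < n - q.2.1 + 1; have := q.1.isLt; have := q.2.isLt; omega⟩⟩
  left_inv := fun ⟨k, l⟩ => sigma_fin_ext rfl (by dsimp; omega)
  right_inv := fun ⟨m, k⟩ => sigma_fin_ext (by dsimp; have := k.isLt; omega) rfl

protected lemma mul_assoc (f g h : MSeries B) : (f.mul g).mul h = f.mul (g.mul h) := by
  funext n x
  simp only [mul, Finset.sum_mul, Finset.mul_sum]
  rw [Finset.sum_sigma', Finset.sum_sigma', Finset.univ_sigma_univ, Finset.univ_sigma_univ]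
  refine (Fintype.sum_equiv (mulAssocEquiv n) _ _ ?_).symm
  rintro ⟨k, l⟩
  simp only [mulAssocEquiv, Equiv.coe_fn_mk]
  rw [← mul_assoc]
  refine congrArg₂ (· * ·) (congrArg₂ (· * ·) ?_ ?_) ?_
  · exact apply_congr f rfl (fun i => congrArg x (Fin.ext rfl))
  · exact apply_congr g (by omega) (fun i => congrArg x (Fin.ext rfl))
  · exact apply_congr h (by omega)
      (fun i => congrArg x (Fin.ext (by dsimp only; omega)))

lemma left_inv_eq_right_inv {a b c : MSeries B} (hba : b.mul a = oneS) (hac : a.mul c = oneS) :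
    b = c := by
  calc b = b.mul (a.mul c) := by rw [hac, mul_oneS]
    _ = (b.mul a).mul c := (MSeries.mul_assoc _ _ _).symm
    _ = c := by rw [hba, oneS_mul]

lemma idS_apply_of_ne_one {n : ℕ} (h : n ≠ 1) (x : Fin n → B) : idS n x = 0 := by
  match n, h with
  | 0, _ => rfl
  | (k+2), _ => rfl

lemma idS_mul_zero (a : MSeries B) (x : Fin 0 → B) : (idS.mul a) 0 x = 0 := by
  show ∑ k : Fin 1, _ = _
  rw [Fin.sum_univ_one]
  show idS 0 _ * _ = 0
  rw [idS_apply_of_ne_one (by omega), zero_mul]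

lemma idS_mul_succ (a : MSeries B) (n : ℕ) (x : Fin (n+1) → B) :
    (idS.mul a) (n+1) x = x 0 * a n (fun i => x i.succ) := by
  show ∑ k : Fin (n+2), _ = _
  rw [Finset.sum_eq_single (⟨1, by omega⟩ : Fin (n+2))]
  · show idS 1 _ * a (n + 1 - 1) _ = _
    refine congrArg₂ (· * ·) ?_ ?_
    · show x (Fin.castLE (by omega) 0) = x 0
      exact congrArg x (Fin.ext rfl)
    · exact apply_congr a rfl
        (fun i => congrArg x (Fin.ext (show 1 + (i:ℕ) = (i:ℕ) + 1 by omega)))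
  · intro b _ hb
    have : (b : ℕ) ≠ 1 := fun h => hb (Fin.ext h)
    show idS b.1 _ * _ = 0
    rw [idS_apply_of_ne_one this, zero_mul]
  · simp

lemma eq_oneS_of_idS_mul_eq_idS {a : MSeries B} (h : idS.mul a = idS) : a = oneS := by
  funext n x
  have h1 := congrFun (congrFun h (n+1)) (Fin.cons 1 x)
  rw [idS_mul_succ] at h1
  simp only [Fin.cons_zero, Fin.cons_succ, one_mul] at h1
  match n with
  | 0 => rw [h1]; rfl
  | (m+1) =>
    rw [h1, idS_apply_of_ne_one (by omega)]
    simp [oneS]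

lemma idS_comp (g : MSeries B) (h0 : ∀ x, g 0 x = 0) : idS.comp g = g := by
  funext n x
  rcases Nat.eq_zero_or_pos n with rfl | hn
  · show ∑ c : Composition 0, _ = g 0 x
    rw [h0, Finset.sum_eq_zero]
    intro c _
    exact idS_apply_of_ne_one (by have := c.length_le; omega) _
  · show ∑ c : Composition n, _ = g n x
    rw [Finset.sum_eq_single (Composition.single n hn)]
    · have hlen := Composition.single_length hn
      refine (apply_congr idS hlen (y := fun _ => g n x) (fun i => ?_)).trans rfl
      refine apply_congr g (by rw [Composition.single_blocksFun]) (fun j => ?_)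
      refine congrArg x (Fin.ext ?_)
      rw [Composition.coe_embedding]
      simp [Composition.sizeUpTo_zero]
    · intro c _ hne
      exact idS_apply_of_ne_one
        (fun hl => hne ((Composition.eq_single_iff_length hn).2 hl)) _
    · simp

lemma idS_comp_idS_mul (a : MSeries B) : idS.comp (idS.mul a) = idS.mul a :=
  idS_comp _ (idS_mul_zero a)

lemma sigma_composition_ext {n : ℕ}
    {p q : Σ r : (Σ m : Fin (n + 1), Composition (n - m.1)), Composition r.1.1}
    (hm : (p.1.1 : ℕ) = q.1.1) (h1 : p.1.2.blocks = q.1.2.blocks)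
    (h2 : p.2.blocks = q.2.blocks) : p = q := by
  obtain ⟨⟨m, c₂⟩, c₁⟩ := p
  obtain ⟨⟨m', c₂'⟩, c₁'⟩ := q
  obtain rfl : m = m' := Fin.ext hm
  obtain rfl : c₂ = c₂' := Composition.ext h1
  obtain rfl : c₁ = c₁' := Composition.ext h2
  rfl

lemma sigma_composition_fin_ext {n : ℕ} {c c' : Composition n} {k : Fin (c.length + 1)}
    {k' : Fin (c'.length + 1)} (hb : c.blocks = c'.blocks) (hk : (k : ℕ) = k') :
    (⟨c, k⟩ : Σ c : Composition n, Fin (c.length + 1)) = ⟨c', k'⟩ := by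
  obtain rfl : c = c' := Composition.ext hb
  obtain rfl : k = k' := Fin.ext hk
  rfl

def compositionSplitEquiv (n : ℕ) :
    (Σ r : (Σ m : Fin (n + 1), Composition (n - m.1)), Composition r.1.1) ≃
      (Σ c : Composition n, Fin (c.length + 1)) where
  toFun p := ⟨(p.2.append p.1.2).cast (Nat.add_sub_cancel' (Nat.lt_succ_iff.mp p.1.1.isLt)),
    ⟨p.2.length, by simp [Composition.length]⟩⟩
  invFun q := ⟨⟨⟨q.1.sizeUpTo q.2.1, by have := q.1.sizeUpTo_le q.2.1; omega⟩,
    q.1.drop q.2.1⟩, q.1.take q.2.1⟩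
  left_inv p := by
    refine sigma_composition_ext ?_ ?_ ?_
    · show ((p.2.blocks ++ p.1.2.blocks).take p.2.blocks.length).sum = _
      rw [List.take_left]
      exact p.2.blocks_sum
    · exact List.drop_left
    · exact List.take_left
  right_inv q := by
    refine sigma_composition_fin_ext (List.take_append_drop _ _) ?_
    show (q.1.blocks.take q.2.1).length = q.2.1
    rw [List.length_take]
    have := q.2.isLt
    have : q.1.length = q.1.blocks.length := rfl
    omega

lemma comp_mul (f g h : MSeries B) :
    (f.mul g).comp h = (f.comp h).mul (g.comp h) := by
  funext n x
  simp only [comp, mul, Finset.sum_mul, Finset.mul_sum]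
  rw [Finset.sum_sigma', Finset.sum_sigma', Finset.sum_sigma',
    Finset.univ_sigma_univ, Finset.univ_sigma_univ, Finset.univ_sigma_univ]
  refine (Fintype.sum_equiv (compositionSplitEquiv n) _ _ ?_).symm
  rintro ⟨⟨m, c₂⟩, c₁⟩
  simp only [compositionSplitEquiv, Equiv.coe_fn_mk]
  refine congrArg₂ (· * ·) ?_ ?_
  · refine apply_congr f rfl (fun i => ?_)
    refine apply_congr h (c₁.append_blocksFun_left c₂ _ _ rfl).symm (fun j => ?_)
    refine congrArg x (Fin.ext ?_)
    simp only [Fin.val_castLE, Composition.coe_embedding]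
    exact (congrArg (· + (j:ℕ)) (c₁.append_sizeUpTo_of_le c₂ _ i.isLt.le)).symm
  · refine apply_congr g (by simp [Composition.length]) (fun i => ?_)
    refine apply_congr h (c₁.append_blocksFun_right c₂ _ _ rfl).symm (fun j => ?_)
    refine congrArg x (Fin.ext ?_)
    simp only [Composition.coe_embedding]
    show _ = (c₁.append c₂).sizeUpTo (c₁.length + (i:ℕ)) + (j:ℕ)
    rw [Composition.append_sizeUpTo_length_add]
    exact (Nat.add_assoc _ _ _).symm

lemma mul_comp_eq_oneS_of_comp_eq_idS {F S : MSeries B}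
    (h : (idS.mul F).comp (idS.mul S) = idS) : S.mul (F.comp (idS.mul S)) = oneS := by
  rw [comp_mul, idS_comp_idS_mul, MSeries.mul_assoc] at h
  exact eq_oneS_of_idS_mul_eq_idS h

end MSeries

open MSeries in
theorem Sinv_I_S_general {B : Type u} [Ring B]
    (F S Sinv h : MSeries B)
    (hinv1 : (idS.mul F).comp h = idS)
    (hSdef : h = idS.mul S)
    (hS1 : Sinv.mul S = oneS) :
    (Sinv.mul idS).mul S = (F.mul idS).comp (idS.mul S) ∧
    (Sinv.mul idS).mul S = (F.mul idS).comp h := by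
  subst hSdef
  have hF_comp : F.comp (idS.mul S) = Sinv :=
    (left_inv_eq_right_inv hS1 (mul_comp_eq_oneS_of_comp_eq_idS hinv1)).symm
  have key : (Sinv.mul idS).mul S = (F.mul idS).comp (idS.mul S) := by
    rw [comp_mul, idS_comp_idS_mul, hF_comp, MSeries.mul_assoc]
  exact ⟨key, key⟩

open MSeries in
/-- For `f = I·F ∈ G_B^I`: `S_f⁻¹ · I · S_f = (F·I) ∘ (I·S_f) = (F·I) ∘ (I·F)^{∘-1}`. -/
theorem Sinv_I_S {K B : Type u} [Field K] [CharZero K] [Ring B] [Algebra K B]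
    (F S Sinv h : MSeries B)
    (hF : IsMultSeries K F) (hF0 : IsUnit (F 0 fun i => i.elim0))
    (hinv1 : (idS.mul F).comp h = idS) (hinv2 : h.comp (idS.mul F) = idS)
    (hSdef : h = idS.mul S)
    (hS1 : Sinv.mul S = oneS) (hS2 : S.mul Sinv = oneS) :
    (Sinv.mul idS).mul S = (F.mul idS).comp (idS.mul S) ∧
    (Sinv.mul idS).mul S = (F.mul idS).comp h :=
  Sinv_I_S_general F S Sinv h hinv1 hSdef hS1
end
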